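/- arXiv:0903.4051 — 2 statements merged into one kernel-verified Lean document; each statement's English description precedes it below -/
import Mathlib

section
/- For all real numbers a, b, c ∈ [0,1] and natural numbers n, m, the Łukasiewicz value of ((b ∸ (n+m)·a) ∸ ((b ∸ c) ∸ n·a)) ∸ (c ∸ m·a) is 0, where x ∸ k·a denotes k-fold iterated truncated subtraction of a from x. -/
/-- Truncated subtraction on the reals. -/
noncomputable def tsub (x y : ℝ) : ℝ := max (x - y) 0

/-- `itSub x a k` is `x ∸ k·a`, the `k`-fold iterated truncated subtraction. -/
noncomputable def itSub (x a : ℝ) : ℕ → ℝ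
  | 0 => x
  | k + 1 => tsub (itSub x a k) a

/-- The key semantic lemma for the Deduction Theorem: the value of
`((b ∸ (n+m)·a) ∸ ((b ∸ c) ∸ n·a)) ∸ (c ∸ m·a)` is 0 on `[0,1]`. -/
theorem deduction_schema_valid (a b c : ℝ)
    (ha : a ∈ Set.Icc (0:ℝ) 1) (hb : b ∈ Set.Icc (0:ℝ) 1)
    (hc : c ∈ Set.Icc (0:ℝ) 1) (n m : ℕ) :
    tsub (tsub (itSub b a (n + m)) (itSub (tsub b c) a n)) (itSub c a m) = 0 := by
  have ha0 : (0:ℝ) ≤ a := ha.1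
  have key : ∀ x : ℝ, 0 ≤ x → ∀ k : ℕ, itSub x a k = max (x - k * a) 0 := by
    intro x hx k
    induction k with
    | zero => simp [itSub, hx]
    | succ k ih =>
      rw [itSub, ih, tsub]
      rcases le_total (x - k * a) 0 with h | h
      · rw [max_eq_right h]
        push_cast
        have : x - (k + 1) * a ≤ 0 := by nlinarith
        rw [max_eq_right (by linarith), max_eq_right this]
      · rw [max_eq_left h]
        push_cast
        ring_nf
  have hbc : (0:ℝ) ≤ tsub b c := le_max_right _ _
  rw [key b hb.1, key (tsub b c) hbc, key c hc.1]
  have h1 : b - c ≤ tsub b c := le_max_left _ _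
  have tz : ∀ x y : ℝ, x ≤ y → tsub x y = 0 := by
    intro x y h
    rw [tsub, max_eq_right (by linarith)]
  apply tz
  rw [tsub]
  apply max_le _ (le_max_right _ _)
  have h2 : b - c - n * a ≤ max (tsub b c - ↑n * a) 0 := by
    have := le_max_left (tsub b c - n * a) 0
    linarith
  have h3 : c - m * a ≤ max (c - ↑m * a) 0 := le_max_left _ _
  rcases le_total (b - ↑(n + m) * a) 0 with h | h
  · rw [max_eq_right h]
    have h4 : (0:ℝ) ≤ max (c - ↑m * a) 0 := le_max_right _ _
    have h5 : (0:ℝ) ≤ max (tsub b c - ↑n * a) 0 := le_max_right _ _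
    linarith
  · rw [max_eq_left h]
    push_cast
    nlinarith [le_max_right (c - (m:ℝ) * a) 0]
end

section
/- Soundness of continuous first-order logic: if Γ ⊢ φ in the proof system with axioms (all generalizations of) A1–A14 and modus ponens, then Γ ⊨ φ, i.e., every continuous pre-structure 𝔐 and assignment σ with 𝔐(γ,σ)=0 for all γ ∈ Γ satisfies 𝔐(φ,σ)=0. Consequently, every satisfiable set of formulae is consistent. -/
/-- A continuous signature: relation and function symbols with arities. -/
structure Sig where
  Func : Type
  Rel : Type
  far : Func → ℕ
  rar : Rel → ℕ

/-- Terms of a continuous signature, over variables indexed by `ℕ`. -/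
inductive Tm (L : Sig) : Type
  | var : ℕ → Tm L
  | app : (f : L.Func) → (Fin (L.far f) → Tm L) → Tm L

/-- Formulae of continuous first-order logic. -/
inductive Fml (L : Sig) : Type
  | rel : (R : L.Rel) → (Fin (L.rar R) → Tm L) → Fml L
  | sub : Fml L → Fml L → Fml L
  | neg : Fml L → Fml L
  | half : Fml L → Fml L
  | sup : ℕ → Fml L → Fml L

variable {L : Sig}

/-- Variables occurring in a term. -/
def Tm.vars : Tm L → Set ℕ
  | .var x => {x}
  | .app _ a => ⋃ i, (a i).vars

/-- Free variables of a formula. -/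
def Fml.fv : Fml L → Set ℕ
  | .rel _ a => ⋃ i, (a i).vars
  | .sub φ ψ => φ.fv ∪ ψ.fv
  | .neg φ => φ.fv
  | .half φ => φ.fv
  | .sup x φ => φ.fv \ {x}

/-- Free substitution of the term `s` for the variable `x` in a term. -/
def Tm.subst (x : ℕ) (s : Tm L) : Tm L → Tm L
  | .var y => if y = x then s else .var y
  | .app f a => .app f fun i => Tm.subst x s (a i)

/-- Free substitution `φ[s/x]` of the term `s` for the variable `x`. -/
def Fml.subst (x : ℕ) (s : Tm L) : Fml L → Fml L
  | .rel R a => .rel R fun i => Tm.subst x s (a i)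
  | .sub φ ψ => .sub (Fml.subst x s φ) (Fml.subst x s ψ)
  | .neg φ => .neg (Fml.subst x s φ)
  | .half φ => .half (Fml.subst x s φ)
  | .sup y φ => if y = x then .sup y φ else .sup y (Fml.subst x s φ)

/-- Correctness of the free substitution `φ[s/x]`: no variable of `s` is
captured by a quantifier of `φ`. -/
def Fml.substOK (x : ℕ) (s : Tm L) : Fml L → Prop
  | .rel _ _ => True
  | .sub φ ψ => Fml.substOK x s φ ∧ Fml.substOK x s ψ
  | .neg φ => Fml.substOK x s φ
  | .half φ => Fml.substOK x s φ
  | .sup y φ => y = x ∨ ((x ∈ φ.fv → y ∉ s.vars) ∧ Fml.substOK x s φ)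


/-- A continuous pre-structure: a nonempty carrier interpreting function
symbols as operations and relation symbols as `[0,1]`-valued maps. -/
structure PreS (L : Sig) where
  M : Type
  ne : Nonempty M
  fn : (f : L.Func) → (Fin (L.far f) → M) → M
  rl : (R : L.Rel) → (Fin (L.rar R) → M) → ℝ
  rl_mem : ∀ (R : L.Rel) (a : Fin (L.rar R) → M), rl R a ∈ Set.Icc (0:ℝ) 1

/-- Interpretation of a term under an assignment. -/
def Tm.val (𝔐 : PreS L) (σ : ℕ → 𝔐.M) : Tm L → 𝔐.M
  | .var x => σ x
  | .app f a => 𝔐.fn f fun i => Tm.val 𝔐 σ (a i)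

/-- The value `𝔐(φ, σ) ∈ [0,1]` of a formula in a continuous pre-structure
under an assignment: `∸` is truncated subtraction, `¬` is `1 - ·`, `½`
halves, and `sup_x` takes the supremum over the carrier. -/
noncomputable def Fml.val (𝔐 : PreS L) : (ℕ → 𝔐.M) → Fml L → ℝ
  | σ, .rel R a => 𝔐.rl R fun i => Tm.val 𝔐 σ (a i)
  | σ, .sub φ ψ => max (Fml.val 𝔐 σ φ - Fml.val 𝔐 σ ψ) 0
  | σ, .neg φ => 1 - Fml.val 𝔐 σ φ
  | σ, .half φ => Fml.val 𝔐 σ φ / 2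
  | σ, .sup x φ => ⨆ a : 𝔐.M, Fml.val 𝔐 (Function.update σ x a) φ

/-- A continuous signature with a distinguished binary metric symbol and
moduli of uniform continuity for each symbol and argument. -/
structure MetSig extends Sig where
  dd : Rel
  dar : rar dd = 2
  δf : (f : Func) → Fin (far f) → ℝ → ℝ
  δr : (R : Rel) → Fin (rar R) → ℝ → ℝ

/-- The interpreted distance `d^𝔐(a,b)` in a pre-structure over a metric
signature. -/
noncomputable def dval (K : MetSig) (𝔐 : PreS K.toSig) (a b : 𝔐.M) : ℝ :=
  𝔐.rl K.dd fun j => if (j : ℕ) = 0 then a else b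

/-- A pre-structure over a metric signature is a *continuous pre-structure*
when `d` is interpreted as a pseudo-metric and every symbol obeys its moduli
of uniform continuity (which take positive values on positive arguments). -/
structure IsMetPre (K : MetSig) (𝔐 : PreS K.toSig) : Prop where
  refl : ∀ a, dval K 𝔐 a a = 0
  symm : ∀ a b, dval K 𝔐 a b = dval K 𝔐 b a
  triangle : ∀ a b c, dval K 𝔐 a c ≤ dval K 𝔐 a b + dval K 𝔐 b c
  δf_pos : ∀ (f : K.Func) (i : Fin (K.far f)) (ε : ℝ), 0 < ε → 0 < K.δf f i ε
  δr_pos : ∀ (R : K.Rel) (i : Fin (K.rar R)) (ε : ℝ), 0 < ε → 0 < K.δr R i ε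
  ucf : ∀ (f : K.Func) (i : Fin (K.far f)) (ε : ℝ), 0 < ε → ε ≤ 1 →
    ∀ a b : Fin (K.far f) → 𝔐.M, (∀ j, j ≠ i → a j = b j) →
      dval K 𝔐 (a i) (b i) < K.δf f i ε →
      dval K 𝔐 (𝔐.fn f a) (𝔐.fn f b) ≤ ε
  ucr : ∀ (R : K.Rel) (i : Fin (K.rar R)) (ε : ℝ), 0 < ε → ε ≤ 1 →
    ∀ a b : Fin (K.rar R) → 𝔐.M, (∀ j, j ≠ i → a j = b j) →
      dval K 𝔐 (a i) (b i) < K.δr R i ε →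
      |𝔐.rl R a - 𝔐.rl R b| ≤ ε

/-- The atomic distance formula `d t₁ t₂`. -/
def dfml (K : MetSig) (t₁ t₂ : Tm K.toSig) : Fml K.toSig :=
  Fml.rel K.dd fun j => if (j : ℕ) = 0 then t₁ else t₂

/-- The derived conjunction `φ ∧ ψ := φ ∸ (φ ∸ ψ)` (semantically, min). -/
def Fml.and {L : Sig} (φ ψ : Fml L) : Fml L := φ.sub (φ.sub ψ)

/-- The formula `1 := ¬(φ ∸ φ)`. -/
def oneFml (K : MetSig) : Fml K.toSig :=
  ((dfml K (Tm.var 0) (Tm.var 0)).sub (dfml K (Tm.var 0) (Tm.var 0))).neg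

/-- The dyadic constant formulae with their values: generated from `1`
(of value 1) by `¬`, `∸`, and halving. -/
inductive DyFml (K : MetSig) : Fml K.toSig → ℝ → Prop
  | one : DyFml K (oneFml K) 1
  | neg {d : Fml K.toSig} {r : ℝ} : DyFml K d r → DyFml K d.neg (1 - r)
  | sub {d d' : Fml K.toSig} {r r' : ℝ} : DyFml K d r → DyFml K d' r' →
      DyFml K (d.sub d') (max (r - r') 0)
  | half {d : Fml K.toSig} {r : ℝ} : DyFml K d r → DyFml K d.half (r / 2)

/-- The formula `2^{-n}`: `n`-fold halving of `1`. -/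
def dyn (K : MetSig) : ℕ → Fml K.toSig
  | 0 => oneFml K
  | n + 1 => (dyn K n).half

/-- The axioms of continuous first-order logic over a signature with a
metric: all generalizations of the schemata A1–A14. -/
inductive MAx (K : MetSig) : Fml K.toSig → Prop
  | a1 (φ ψ) : MAx K ((Fml.sub φ ψ).sub φ)
  | a2 (φ ψ χ) : MAx K (((Fml.sub χ φ).sub (Fml.sub χ ψ)).sub (ψ.sub φ))
  | a3 (φ ψ) : MAx K ((Fml.sub φ (Fml.sub φ ψ)).sub (ψ.sub (ψ.sub φ)))
  | a4 (φ ψ) : MAx K ((Fml.sub φ ψ).sub ((Fml.neg ψ).sub (Fml.neg φ)))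
  | a5 (φ) : MAx K ((Fml.half φ).sub (φ.sub φ.half))
  | a6 (φ) : MAx K ((Fml.sub φ φ.half).sub φ.half)
  | a7 (x : ℕ) (φ ψ) :
      MAx K (((Fml.sup x ψ).sub (Fml.sup x φ)).sub (Fml.sup x (ψ.sub φ)))
  | a8 (x : ℕ) (t : Tm K.toSig) (φ) : Fml.substOK x t φ →
      MAx K ((Fml.subst x t φ).sub (Fml.sup x φ))
  | a9 (x : ℕ) (φ) : x ∉ Fml.fv φ → MAx K ((Fml.sup x φ).sub φ)
  | a10 (z : ℕ) : MAx K (dfml K (Tm.var z) (Tm.var z))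
  | a11 (z w : ℕ) :
      MAx K ((dfml K (Tm.var z) (Tm.var w)).sub (dfml K (Tm.var w) (Tm.var z)))
  | a12 (x y z : ℕ) :
      MAx K (((dfml K (Tm.var x) (Tm.var z)).sub
        (dfml K (Tm.var x) (Tm.var y))).sub (dfml K (Tm.var y) (Tm.var z)))
  | a13 (f : K.Func) (i : Fin (K.far f)) (ε : ℝ) (q r : Fml K.toSig)
      (qv rv : ℝ) (z w : ℕ) (xs : Fin (K.far f) → ℕ) :
      0 < ε → ε ≤ 1 → DyFml K q qv → DyFml K r rv → ε < rv →
      qv < K.δf f i ε →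
      MAx K ((q.sub (dfml K (Tm.var z) (Tm.var w))).and
        ((dfml K (Tm.app f fun j => if j = i then Tm.var z else Tm.var (xs j))
          (Tm.app f fun j => if j = i then Tm.var w else Tm.var (xs j))).sub r))
  | a14 (R : K.Rel) (i : Fin (K.rar R)) (ε : ℝ) (q r : Fml K.toSig)
      (qv rv : ℝ) (z w : ℕ) (xs : Fin (K.rar R) → ℕ) :
      0 < ε → ε ≤ 1 → DyFml K q qv → DyFml K r rv → ε < rv →
      qv < K.δr R i ε →
      MAx K ((q.sub (dfml K (Tm.var z) (Tm.var w))).and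
        (((Fml.rel R fun j => if j = i then Tm.var z else Tm.var (xs j)).sub
          (Fml.rel R fun j => if j = i then Tm.var w else Tm.var (xs j))).sub r))
  | gen (x : ℕ) (φ) : MAx K φ → MAx K (Fml.sup x φ)

/-- Derivability in continuous first-order logic with a metric, with modus
ponens as the only rule of inference. -/
inductive MDeriv (K : MetSig) : Set (Fml K.toSig) → Fml K.toSig → Prop
  | ax {Γ φ} : MAx K φ → MDeriv K Γ φ
  | hyp {Γ φ} : φ ∈ Γ → MDeriv K Γ φ
  | mp {Γ φ ψ} : MDeriv K Γ φ → MDeriv K Γ (Fml.sub ψ φ) → MDeriv K Γ ψ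

/-- Consistency: some formula is not provable. -/
def MConsistent (K : MetSig) (Γ : Set (Fml K.toSig)) : Prop :=
  ∃ φ : Fml K.toSig, ¬ MDeriv K Γ φ

/-!
A derivation is sound because modus ponens preserves the value `0`: `𝔐(ψ ∸ φ, σ) = 0` says
`𝔐(ψ, σ) ≤ 𝔐(φ, σ)`. Accordingly every axiom `A ∸ B` amounts to the inequality `𝔐(A) ≤ 𝔐(B)`:
for A1–A6 an identity about truncated subtraction on `[0,1]`, for A7–A9 a property of suprema
(A8 via the substitution lemma `𝔐(φ[t/x], σ) = 𝔐(φ, σ[x ↦ t^𝔐(σ)])`), for A10–A12 the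
pseudo-metric axioms, and for A13–A14 the moduli of uniform continuity. A satisfiable set is
consistent because the formula `1` takes the value `1` and so is not derivable.
-/

namespace Tm

theorem val_congr (𝔐 : PreS L) (t : Tm L) {σ σ' : ℕ → 𝔐.M}
    (h : ∀ z ∈ t.vars, σ z = σ' z) : t.val 𝔐 σ = t.val 𝔐 σ' := by
  induction t with
  | var y => exact h y rfl
  | app f a ih =>
    simp only [Tm.val]
    congr 1
    funext i
    exact ih i fun z hz => h z (Set.mem_iUnion.2 ⟨i, hz⟩)

theorem val_subst (𝔐 : PreS L) (σ : ℕ → 𝔐.M) (x : ℕ) (s t : Tm L) :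
    (Tm.subst x s t).val 𝔐 σ = t.val 𝔐 (Function.update σ x (s.val 𝔐 σ)) := by
  induction t with
  | var y =>
    by_cases h : y = x
    · subst h; simp [Tm.subst, Tm.val]
    · simp [Tm.subst, Tm.val, h]
  | app f a ih =>
    simp only [Tm.subst, Tm.val]
    congr 1
    funext i
    exact ih i

theorem val_ite_var (𝔐 : PreS L) (σ : ℕ → 𝔐.M) {n : ℕ} (i : Fin n) (z : ℕ)
    (xs : Fin n → ℕ) :
    (fun j => Tm.val 𝔐 σ (if j = i then .var z else .var (xs j))) =
      Function.update (σ ∘ xs) i (σ z) := by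
  funext j
  by_cases h : j = i
  · subst h; simp [Tm.val]
  · simp [h, Tm.val]

end Tm

namespace Fml

theorem val_mem_Icc (𝔐 : PreS L) (φ : Fml L) (σ : ℕ → 𝔐.M) :
    φ.val 𝔐 σ ∈ Set.Icc (0 : ℝ) 1 := by
  induction φ generalizing σ with
  | rel R a => exact 𝔐.rl_mem _ _
  | sub φ ψ ihφ ihψ =>
    exact ⟨le_max_right _ _, max_le (by linarith [(ihφ σ).2, (ihψ σ).1]) zero_le_one⟩
  | neg φ ih => obtain ⟨h₀, h₁⟩ := ih σ; constructor <;> simp only [Fml.val] <;> linarith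
  | half φ ih => obtain ⟨h₀, h₁⟩ := ih σ; constructor <;> simp only [Fml.val] <;> linarith
  | sup x φ ih =>
    have := 𝔐.ne
    have hbdd : BddAbove (Set.range fun a => φ.val 𝔐 (Function.update σ x a)) :=
      ⟨1, by rintro _ ⟨a, rfl⟩; exact (ih _).2⟩
    exact ⟨le_ciSup_of_le hbdd (Classical.arbitrary _) (ih _).1, ciSup_le fun a => (ih _).2⟩

theorem val_nonneg (𝔐 : PreS L) (φ : Fml L) (σ : ℕ → 𝔐.M) : 0 ≤ φ.val 𝔐 σ :=
  (val_mem_Icc 𝔐 φ σ).1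

theorem bddAbove_range_val_update (𝔐 : PreS L) (φ : Fml L) (σ : ℕ → 𝔐.M) (x : ℕ) :
    BddAbove (Set.range fun a => φ.val 𝔐 (Function.update σ x a)) :=
  ⟨1, by rintro _ ⟨a, rfl⟩; exact (val_mem_Icc 𝔐 φ _).2⟩

theorem val_sub_eq_zero_iff (𝔐 : PreS L) (φ ψ : Fml L) (σ : ℕ → 𝔐.M) :
    (φ.sub ψ).val 𝔐 σ = 0 ↔ φ.val 𝔐 σ ≤ ψ.val 𝔐 σ := by
  rw [Fml.val, max_eq_right_iff, sub_nonpos]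

theorem val_and (𝔐 : PreS L) (φ ψ : Fml L) (σ : ℕ → 𝔐.M) :
    (φ.and ψ).val 𝔐 σ = min (φ.val 𝔐 σ) (ψ.val 𝔐 σ) := by
  have hφ := val_nonneg 𝔐 φ σ
  have hψ := val_nonneg 𝔐 ψ σ
  simp only [Fml.and, Fml.val]
  rcases le_total (φ.val 𝔐 σ) (ψ.val 𝔐 σ) with h | h
  · rw [max_eq_right (sub_nonpos.2 h), sub_zero, max_eq_left hφ, min_eq_left h]
  · rw [max_eq_left (sub_nonneg.2 h), sub_sub_cancel, max_eq_left hψ, min_eq_right h]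

theorem val_congr (𝔐 : PreS L) (φ : Fml L) {σ σ' : ℕ → 𝔐.M}
    (h : ∀ z ∈ φ.fv, σ z = σ' z) : φ.val 𝔐 σ = φ.val 𝔐 σ' := by
  induction φ generalizing σ σ' with
  | rel R a =>
    simp only [Fml.val]
    congr 1
    funext i
    exact (a i).val_congr 𝔐 fun z hz => h z (Set.mem_iUnion.2 ⟨i, hz⟩)
  | sub φ ψ ihφ ihψ =>
    simp only [Fml.val]
    rw [ihφ fun z hz => h z (Or.inl hz), ihψ fun z hz => h z (Or.inr hz)]
  | neg φ ih => simp only [Fml.val]; rw [ih h]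
  | half φ ih => simp only [Fml.val]; rw [ih h]
  | sup x φ ih =>
    simp only [Fml.val]
    refine iSup_congr fun a => ih fun z hz => ?_
    by_cases hzx : z = x
    · simp [hzx]
    · simp only [Function.update_of_ne hzx]
      exact h z ⟨hz, hzx⟩

theorem val_subst (𝔐 : PreS L) (x : ℕ) (s : Tm L) (φ : Fml L) {σ : ℕ → 𝔐.M}
    (hφ : φ.substOK x s) :
    (φ.subst x s).val 𝔐 σ = φ.val 𝔐 (Function.update σ x (s.val 𝔐 σ)) := by
  induction φ generalizing σ with
  | rel R a =>
    simp only [Fml.subst, Fml.val]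
    congr 1
    funext i
    exact Tm.val_subst 𝔐 σ x s (a i)
  | sub φ ψ ihφ ihψ =>
    simp only [Fml.subst, Fml.val]
    rw [ihφ hφ.1, ihψ hφ.2]
  | neg φ ih => simp only [Fml.subst, Fml.val]; rw [ih hφ]
  | half φ ih => simp only [Fml.subst, Fml.val]; rw [ih hφ]
  | sup y φ ih =>
    by_cases hyx : y = x
    · subst hyx
      simp only [Fml.subst, if_pos]
      exact (sup y φ).val_congr 𝔐 fun z hz => (Function.update_of_ne hz.2 _ _).symm
    obtain ⟨hcapture, hφ⟩ := hφ.resolve_left hyx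
    simp only [Fml.subst, if_neg hyx, Fml.val]
    refine iSup_congr fun a => ?_
    rw [ih hφ]
    refine φ.val_congr 𝔐 fun z hz => ?_
    by_cases hzx : z = x
    · subst hzx
      -- `y` does not occur in `s`, so updating `y` does not change the value of `s`
      rw [Function.update_self, Function.update_of_ne (Ne.symm hyx), Function.update_self]
      refine s.val_congr 𝔐 fun w hw => Function.update_of_ne ?_ _ _
      rintro rfl
      exact hcapture hz hw
    · by_cases hzy : z = y
      · subst hzy; simp [hzx]
      · simp [hzx, hzy]

theorem val_sup_sub_le (𝔐 : PreS L) (x : ℕ) (φ ψ : Fml L) (σ : ℕ → 𝔐.M) :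
    (sup x ψ).val 𝔐 σ - (sup x φ).val 𝔐 σ ≤ (sup x (ψ.sub φ)).val 𝔐 σ := by
  have := 𝔐.ne
  rw [sub_le_iff_le_add]
  refine ciSup_le fun a => ?_
  have hψφ : ψ.val 𝔐 (Function.update σ x a) ≤
      (ψ.sub φ).val 𝔐 (Function.update σ x a) + φ.val 𝔐 (Function.update σ x a) := by
    rw [← sub_le_iff_le_add]
    exact le_max_left _ _
  exact hψφ.trans (add_le_add (le_ciSup (bddAbove_range_val_update 𝔐 _ σ x) a)
    (le_ciSup (bddAbove_range_val_update 𝔐 φ σ x) a))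

theorem val_subst_le_val_sup (𝔐 : PreS L) (x : ℕ) (t : Tm L) (φ : Fml L) (σ : ℕ → 𝔐.M)
    (hφ : φ.substOK x t) : (φ.subst x t).val 𝔐 σ ≤ (sup x φ).val 𝔐 σ := by
  rw [val_subst 𝔐 x t φ hφ]
  exact le_ciSup (bddAbove_range_val_update 𝔐 φ σ x) _

theorem val_sup_of_notMem_fv (𝔐 : PreS L) {x : ℕ} {φ : Fml L} (hx : x ∉ φ.fv)
    (σ : ℕ → 𝔐.M) : (sup x φ).val 𝔐 σ = φ.val 𝔐 σ := by
  have := 𝔐.ne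
  refine (iSup_congr fun a => φ.val_congr 𝔐 fun z hz => ?_).trans ciSup_const
  exact Function.update_of_ne (ne_of_mem_of_not_mem hz hx) _ _

theorem val_sup_eq_zero (𝔐 : PreS L) (x : ℕ) {φ : Fml L} (h : ∀ σ : ℕ → 𝔐.M, φ.val 𝔐 σ = 0)
    (σ : ℕ → 𝔐.M) : (sup x φ).val 𝔐 σ = 0 := by
  have := 𝔐.ne
  exact (iSup_congr fun a => h _).trans ciSup_const

end Fml

section Metric

variable {K : MetSig}

theorem val_dfml (𝔐 : PreS K.toSig) (σ : ℕ → 𝔐.M) (t₁ t₂ : Tm K.toSig) :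
    (dfml K t₁ t₂).val 𝔐 σ = dval K 𝔐 (t₁.val 𝔐 σ) (t₂.val 𝔐 σ) := by
  simp only [dfml, dval, Fml.val]
  congr 1
  funext j
  split <;> rfl

theorem DyFml.val_eq (𝔐 : PreS K.toSig) {d : Fml K.toSig} {r : ℝ} (h : DyFml K d r)
    (σ : ℕ → 𝔐.M) : d.val 𝔐 σ = r := by
  induction h with
  | one => simp [Fml.val, oneFml]
  | neg _ ih => simp [Fml.val, ih]
  | sub _ _ ih ih' => simp [Fml.val, ih, ih']
  | half _ ih => simp [Fml.val, ih]

/-- The common shape of A13 and A14: either `d(z, w) ≥ q`, or `d(z, w) < q < δ` and the modulus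
of continuity bounds `χ` by `ε < r`. -/
theorem val_modulus_axiom_eq_zero (𝔐 : PreS K.toSig) (σ : ℕ → 𝔐.M) {q r χ : Fml K.toSig}
    {qv rv ε δ : ℝ} {z w : ℕ} (hq : DyFml K q qv) (hr : DyFml K r rv) (hεr : ε < rv) (hqδ : qv < δ)
    (huc : dval K 𝔐 (σ z) (σ w) < δ → χ.val 𝔐 σ ≤ ε) :
    ((q.sub (dfml K (.var z) (.var w))).and (χ.sub r)).val 𝔐 σ = 0 := by
  rw [Fml.val_and]
  rcases le_or_gt qv (dval K 𝔐 (σ z) (σ w)) with hfar | hnear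
  · rw [(Fml.val_sub_eq_zero_iff 𝔐 _ _ σ).2 (by rwa [hq.val_eq, val_dfml])]
    exact min_eq_left (Fml.val_nonneg 𝔐 _ σ)
  · rw [(Fml.val_sub_eq_zero_iff 𝔐 χ r σ).2 (by rw [hr.val_eq]; linarith [huc (by linarith)])]
    exact min_eq_right (Fml.val_nonneg 𝔐 _ σ)

variable {𝔐 : PreS K.toSig}

theorem MAx.val_eq_zero {φ : Fml K.toSig} (h : MAx K φ) (hM : IsMetPre K 𝔐) (σ : ℕ → 𝔐.M) :
    φ.val 𝔐 σ = 0 := by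
  induction h generalizing σ with
  | a1 | a2 | a3 | a4 | a5 | a6 =>
    have := fun φ : Fml K.toSig => Fml.val_nonneg 𝔐 φ σ
    rw [Fml.val_sub_eq_zero_iff]
    simp only [Fml.val]
    grind
  | a7 x φ ψ =>
    exact (Fml.val_sub_eq_zero_iff 𝔐 _ _ σ).2
      (max_le (Fml.val_sup_sub_le 𝔐 x φ ψ σ) (Fml.val_nonneg 𝔐 _ σ))
  | a8 x t φ hφ =>
    exact (Fml.val_sub_eq_zero_iff 𝔐 _ _ σ).2 (Fml.val_subst_le_val_sup 𝔐 x t φ σ hφ)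
  | a9 x φ hx => exact (Fml.val_sub_eq_zero_iff 𝔐 _ _ σ).2 (Fml.val_sup_of_notMem_fv 𝔐 hx σ).le
  | a10 z => rw [val_dfml]; exact hM.refl _
  | a11 z w => rw [Fml.val_sub_eq_zero_iff, val_dfml, val_dfml]; exact (hM.symm _ _).le
  | a12 x y z =>
    rw [Fml.val_sub_eq_zero_iff, Fml.val, val_dfml, val_dfml, val_dfml]
    simp only [Tm.val]
    exact max_le (by linarith [hM.triangle (σ x) (σ y) (σ z)]) (𝔐.rl_mem _ _).1
  | a13 f i ε q r qv rv z w xs hε hε1 hq hr hεr hδ =>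
    refine val_modulus_axiom_eq_zero 𝔐 σ hq hr hεr hδ fun hzw => ?_
    rw [val_dfml]
    simp only [Tm.val, Tm.val_ite_var]
    exact hM.ucf f i ε hε hε1 _ _ (fun j hj => by simp [hj]) (by simpa using hzw)
  | a14 R i ε q r qv rv z w xs hε hε1 hq hr hεr hδ =>
    refine val_modulus_axiom_eq_zero 𝔐 σ hq hr hεr hδ fun hzw => ?_
    simp only [Fml.val, Tm.val_ite_var]
    refine max_le (le_of_abs_le (hM.ucr R i ε hε hε1 _ _ (fun j hj => ?_) ?_)) hε.le
    · simp [hj]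
    · simpa using hzw
  | gen x φ _ ih => exact Fml.val_sup_eq_zero 𝔐 x ih σ

theorem MDeriv.val_eq_zero {Γ : Set (Fml K.toSig)} {φ : Fml K.toSig} (h : MDeriv K Γ φ)
    (hM : IsMetPre K 𝔐) {σ : ℕ → 𝔐.M} (hΓ : ∀ γ ∈ Γ, γ.val 𝔐 σ = 0) : φ.val 𝔐 σ = 0 := by
  induction h with
  | ax hφ => exact hφ.val_eq_zero hM σ
  | hyp hφ => exact hΓ _ hφ
  | @mp φ ψ _ _ ihφ ihψφ =>
    rw [Fml.val_sub_eq_zero_iff, ihφ] at ihψφ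
    exact ihψφ.antisymm (Fml.val_nonneg 𝔐 ψ σ)

end Metric

/-- Soundness of continuous first-order logic: if `Γ ⊢ φ` then every
continuous pre-structure and assignment satisfying `Γ` satisfies `φ`;
consequently every satisfiable set of formulae is consistent. -/
theorem soundness (K : MetSig) :
    (∀ (Γ : Set (Fml K.toSig)) (φ : Fml K.toSig), MDeriv K Γ φ →
      ∀ (𝔐 : PreS K.toSig), IsMetPre K 𝔐 → ∀ σ : ℕ → 𝔐.M,
        (∀ γ ∈ Γ, Fml.val 𝔐 σ γ = 0) → Fml.val 𝔐 σ φ = 0) ∧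
    (∀ Γ : Set (Fml K.toSig),
      (∃ (𝔐 : PreS K.toSig) (_ : IsMetPre K 𝔐) (σ : ℕ → 𝔐.M),
        ∀ γ ∈ Γ, Fml.val 𝔐 σ γ = 0) →
      MConsistent K Γ) := by
  refine ⟨fun Γ φ h 𝔐 hM σ hΓ => h.val_eq_zero hM hΓ, ?_⟩
  rintro Γ ⟨𝔐, hM, σ, hΓ⟩
  refine ⟨oneFml K, fun h => ?_⟩
  have hone : (oneFml K).val 𝔐 σ = 1 := DyFml.one.val_eq 𝔐 σ
  exact one_ne_zero (hone.symm.trans (h.val_eq_zero hM hΓ))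
end
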